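/- arXiv:2505.12783 — 9 statements merged into one kernel-verified Lean document; each statement's English description precedes it below -/
import Mathlib

section
/- Let G be a group whose commutator subgroup G' is abelian (G is metabelian), and let a, c ∈ G with a^6 ∈ G' and c ∈ G'. If c^a ≠ c^3, then c ≠ c · c^a · (c^{a^3})^{-1} · (c^{a^4})^{-1}. -/
/-!
Put `x i = (a ^ i)⁻¹ * c * a ^ i`. These conjugates lie in the abelian normal subgroup `G'`, and
`a ^ 6` commutes with `c`, so `x` is `6`-periodic. The negated conclusion says `x 1 = x 3 * x 4`,
and conjugating by `a ^ i` gives `x (i + 1) = x (i + 3) * x (i + 4)` for every `i`. Written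
additively in `G'`, this is a linear system over `ℤ` in which an integer combination of
five equations isolates `x 1 = x 0 ^ 3`, i.e. `c ^ a = c ^ 3`.
-/

open Function

theorem eq_three_nsmul_of_periodic_of_recurrence {M : Type*} [AddCommGroup M] {y : ℕ → M}
    (hper : Periodic y 6) (hrec : ∀ i, y (i + 1) = y (i + 3) + y (i + 4)) : y 1 = 3 • y 0 := by
  have h6 := hper 0; have h7 := hper 1; have h8 := hper 2; have h9 := hper 3
  have e0 := hrec 0; have e1 := hrec 1; have e2 := hrec 2; have e3 := hrec 3; have e5 := hrec 5
  simp only [zero_add, Nat.reduceAdd] at h6 h7 h8 h9 e0 e1 e2 e3 e5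
  linear_combination (norm := module)
    (2 : ℤ) • e0 - e1 + e2 + e3 - e5 + (3 : ℤ) • h6 + h7 - h8 - h9

section

variable {G : Type*} [Group G] (a c : G)

theorem conj_pow_add (i j : ℕ) :
    (a ^ (i + j))⁻¹ * c * a ^ (i + j) = (a ^ j)⁻¹ * ((a ^ i)⁻¹ * c * a ^ i) * a ^ j := by
  rw [pow_add]
  group

open scoped IsMulCommutative in
theorem conj_eq_pow_three_of_mem_of_isMulCommutative {N : Subgroup G} [N.Normal]
    [IsMulCommutative N] (hc : c ∈ N) (ha : Commute (a ^ 6) c)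
    (h : a⁻¹ * c * a = (a ^ 4)⁻¹ * c * a ^ 4 * ((a ^ 3)⁻¹ * c * a ^ 3)) :
    a⁻¹ * c * a = c ^ 3 := by
  let x : ℕ → G := fun i => (a ^ i)⁻¹ * c * a ^ i
  have hmem (i : ℕ) : x i ∈ N := ‹N.Normal›.conj_mem' c hc _
  let y : ℕ → Additive N := fun i => .ofMul ⟨x i, hmem i⟩
  have hper : Periodic y 6 := by
    intro i
    simp only [y, x]
    congr 2
    rw [add_comm, conj_pow_add, ha.inv_mul_cancel]
  have hx1 : x 1 = x 3 * x 4 := by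
    rw [setLike_mul_comm (hmem 3) (hmem 4)]
    simpa [x] using h
  have hrec (i : ℕ) : y (i + 1) = y (i + 3) + y (i + 4) := by
    apply Additive.toMul.injective
    apply Subtype.ext
    simp only [y, x, toMul_add, toMul_ofMul, Subgroup.coe_mul]
    rw [add_comm i, add_comm i, add_comm i, conj_pow_add, conj_pow_add, conj_pow_add]
    simp only [x] at hx1
    rw [hx1]
    group
  have key : y 1 = 3 • y 0 := eq_three_nsmul_of_periodic_of_recurrence hper hrec
  simpa [y, x] using congrArg (fun z => ((Additive.toMul z : N) : G)) key

end

theorem stmt_3 {G : Type*} [Group G]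
    (hmet : ∀ x ∈ commutator G, ∀ y ∈ commutator G, x * y = y * x)
    (a c : G) (ha : a ^ 6 ∈ commutator G) (hc : c ∈ commutator G)
    (hne : a⁻¹ * c * a ≠ c ^ 3) :
    c ≠ c * (a⁻¹ * c * a) * ((a ^ 3)⁻¹ * c * a ^ 3)⁻¹ * ((a ^ 4)⁻¹ * c * a ^ 4)⁻¹ := by
  intro h
  have : IsMulCommutative (commutator G) := ⟨⟨fun x y => Subtype.ext (hmet _ x.2 _ y.2)⟩⟩
  rw [eq_comm, mul_assoc, mul_assoc, mul_eq_left, ← mul_inv_rev, mul_inv_eq_one] at h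
  exact hne (conj_eq_pow_three_of_mem_of_isMulCommutative a c hc (hmet _ ha _ hc) h)
end

section
/- Let G be a metabelian group with a, c ∈ G, a^6 ∈ G', c ∈ G'. If c = c · c^a · (c^{a^3})^{-1} · (c^{a^4})^{-1}, then c^{a^3} = c^{-1}. -/
/-!
Conjugation by `a⁻¹` acts on the abelian group `G'` by an endomorphism `t` with `t⁶ c = c`.
Additively the hypothesis reads `t c = t⁴ c + t³ c`; applying `t³` gives `t⁴ c = t c + c`,
and substituting back leaves `c + t³ c = 0`.
-/

theorem pow_three_smul_eq_inv_of_eq {M A : Type*} [Monoid M] [CommGroup A] [MulDistribMulAction M A]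
    (m : M) (c : A) (h6 : m ^ 6 • c = c)
    (h : c = c * (m • c) * (m ^ 3 • c)⁻¹ * (m ^ 4 • c)⁻¹) :
    m ^ 3 • c = c⁻¹ := by
  have hm1 : m • c = m ^ 4 • c * m ^ 3 • c := by
    rw [eq_comm, mul_inv_eq_iff_eq_mul, mul_inv_eq_iff_eq_mul, mul_assoc] at h
    exact mul_left_cancel h
  have hm4 : m ^ 4 • c = m • c * c :=
    calc m ^ 4 • c = m ^ 3 • m • c := by rw [smul_smul, ← pow_succ]
      _ = m ^ 3 • (m ^ 4 • c * m ^ 3 • c) := by rw [← hm1]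
      _ = m ^ 7 • c * m ^ 6 • c := by rw [smul_mul', smul_smul, smul_smul, ← pow_add, ← pow_add]
      _ = m • c * c := by rw [pow_succ' m 6, mul_smul, h6]
  rw [hm4, mul_assoc, left_eq_mul] at hm1
  exact eq_inv_of_mul_eq_one_right hm1

theorem stmt_4 {G : Type*} [Group G]
    (hmet : ∀ x ∈ commutator G, ∀ y ∈ commutator G, x * y = y * x)
    (a c : G) (ha : a ^ 6 ∈ commutator G) (hc : c ∈ commutator G)
    (heq : c = c * (a⁻¹ * c * a) * ((a ^ 3)⁻¹ * c * a ^ 3)⁻¹ * ((a ^ 4)⁻¹ * c * a ^ 4)⁻¹) :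
    (a ^ 3)⁻¹ * c * a ^ 3 = c⁻¹ := by
  let _ : CommGroup (commutator G) :=
    { mul_comm := fun x y => Subtype.ext (hmet _ x.2 _ y.2) }
  let m := MulAut.conjNormal (H := commutator G) a⁻¹
  let c' : commutator G := ⟨c, hc⟩
  have conj_eq (n : ℕ) : ((m ^ n • c' : commutator G) : G) = (a ^ n)⁻¹ * c * a ^ n := by
    simp [m, c', ← map_pow, MulAut.smul_def, inv_pow]
  have conj_one : ((m • c' : commutator G) : G) = a⁻¹ * c * a := by simpa using conj_eq 1
  have h6 : m ^ 6 • c' = c' := by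
    ext; rw [conj_eq, mul_assoc, ← hmet _ ha _ hc, inv_mul_cancel_left]
  have key := pow_three_smul_eq_inv_of_eq m c' h6 <| by
    ext; simpa only [Subgroup.coe_mul, Subgroup.coe_inv, conj_eq, conj_one] using heq
  rw [← conj_eq, key]; rfl
end

section
/- Let G be a metabelian group with a, c ∈ G, a^6 ∈ G', c ∈ G'. If c = c · c^a · (c^{a^3})^{-1} · (c^{a^4})^{-1}, then c^7 = 1. -/
/-!
Write `d k = a⁻ᵏ c aᵏ`. These conjugates lie in the abelian group `G'`, the hypothesis says
`d (k + 1) = d (k + 3) * d (k + 4)` for every `k` (conjugate it by `aᵏ`), and `d` has period `6`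
because `a⁶ ∈ G'` commutes with them. Two shifts of the relation give `d (k + 3) = (d k)⁻¹`,
after which the relation reads `d k = d (k + 1) ^ (-2)`; iterating three times,
`c = d 3 ^ (-8) = c ^ 8`.
-/

section ShiftRelation

variable {M : Type*} [CommGroup M] {d : ℕ → M}

theorem antiperiodic_of_shift_relation (hper : ∀ k, d (k + 6) = d k)
    (hrec : ∀ k, d (k + 1) = d (k + 3) * d (k + 4)) (k : ℕ) : d (k + 3) = (d k)⁻¹ := by
  have h : d (k + 4) = d k * d (k + 1) := by
    simpa only [show k + 3 + 3 = k + 6 from rfl, show k + 3 + 4 = k + 1 + 6 from rfl, hper]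
      using hrec (k + 3)
  refine eq_inv_of_mul_eq_one_left (mul_left_cancel (a := d (k + 4)) ?_)
  rw [mul_one]
  nth_rw 2 [h]
  rw [hrec k]
  ac_rfl

theorem eq_zpow_neg_two_of_shift_relation (hper : ∀ k, d (k + 6) = d k)
    (hrec : ∀ k, d (k + 1) = d (k + 3) * d (k + 4)) (k : ℕ) : d k = d (k + 1) ^ (-2 : ℤ) := by
  have h := hrec k
  rw [antiperiodic_of_shift_relation hper hrec k,
    antiperiodic_of_shift_relation hper hrec (k + 1)] at h
  rw [zpow_neg, eq_inv_iff_mul_eq_one, zpow_two]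
  nth_rw 1 [h]
  group

theorem eq_zpow_of_shift_relation (hper : ∀ k, d (k + 6) = d k)
    (hrec : ∀ k, d (k + 1) = d (k + 3) * d (k + 4)) (k n : ℕ) :
    d k = d (k + n) ^ ((-2) ^ n : ℤ) := by
  induction n with
  | zero => simp
  | succ n ih =>
    rw [ih, eq_zpow_neg_two_of_shift_relation hper hrec (k + n), ← zpow_mul, pow_succ',
      add_assoc]

theorem pow_seven_eq_one_of_shift_relation (hper : ∀ k, d (k + 6) = d k)
    (hrec : ∀ k, d (k + 1) = d (k + 3) * d (k + 4)) : d 0 ^ 7 = 1 := by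
  have h := eq_zpow_of_shift_relation hper hrec 0 3
  rw [zero_add, antiperiodic_of_shift_relation hper hrec 0] at h
  rw [show ((-2 : ℤ) ^ 3) = -8 by norm_num, inv_zpow', neg_neg, zpow_ofNat] at h
  exact mul_eq_right.mp (pow_succ (d 0) 7 ▸ h.symm)

end ShiftRelation

section ConjPow

variable {G : Type*} [Group G]

def conjPow (a c : G) (k : ℕ) : G := (a ^ k)⁻¹ * c * a ^ k

theorem conjPow_zero (a c : G) : conjPow a c 0 = c := by
  simp [conjPow]

theorem conjPow_mul (a x y : G) (k : ℕ) :
    conjPow a (x * y) k = conjPow a x k * conjPow a y k := by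
  simp only [conjPow]
  group

theorem conjPow_add (a c : G) (k i : ℕ) : conjPow a c (k + i) = conjPow a (conjPow a c i) k := by
  simp only [conjPow]
  group

theorem conjPow_add_of_commute {a c : G} {n : ℕ} (h : Commute (a ^ n) c) (k : ℕ) :
    conjPow a c (k + n) = conjPow a c k := by
  have hfix : conjPow a c n = c := by rw [conjPow, mul_assoc, ← h.eq, inv_mul_cancel_left]
  rw [conjPow_add, hfix]

theorem conjPow_mem {H : Subgroup G} [H.Normal] (a : G) {c : G} (hc : c ∈ H) (k : ℕ) :
    conjPow a c k ∈ H := by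
  simpa [conjPow] using Subgroup.Normal.conj_mem inferInstance c hc (a ^ k)⁻¹

theorem eq_mul_of_eq_mul_mul_inv_mul_inv {x y z w : G} (hzw : Commute z w)
    (h : x = x * y * z⁻¹ * w⁻¹) : y = z * w := by
  rw [mul_assoc, mul_assoc, left_eq_mul, mul_eq_one_iff_eq_inv, mul_inv_rev, inv_inv,
    inv_inv] at h
  rw [h, hzw.eq]

end ConjPow

theorem stmt_5 {G : Type*} [Group G]
    (hmet : ∀ x ∈ commutator G, ∀ y ∈ commutator G, x * y = y * x)
    (a c : G) (ha : a ^ 6 ∈ commutator G) (hc : c ∈ commutator G)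
    (heq : c = c * (a⁻¹ * c * a) * ((a ^ 3)⁻¹ * c * a ^ 3)⁻¹ * ((a ^ 4)⁻¹ * c * a ^ 4)⁻¹) :
    c ^ 7 = 1 := by
  let : CommGroup (commutator G) :=
    { (commutator G).toGroup with mul_comm := fun x y => Subtype.ext (hmet _ x.2 _ y.2) }
  let d : ℕ → commutator G := fun k => ⟨conjPow a c k, conjPow_mem a hc k⟩
  have hrel : conjPow a c 1 = conjPow a c 3 * conjPow a c 4 :=
    eq_mul_of_eq_mul_mul_inv_mul_inv (hmet _ (conjPow_mem a hc 3) _ (conjPow_mem a hc 4))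
      (by simpa only [conjPow, pow_one] using heq)
  have hper : ∀ k, d (k + 6) = d k := fun k =>
    Subtype.ext (conjPow_add_of_commute (hmet _ ha _ hc) k)
  have hrec : ∀ k, d (k + 1) = d (k + 3) * d (k + 4) := fun k => Subtype.ext <| by
    simp only [d, Subgroup.coe_mul, conjPow_add _ _ k, hrel, conjPow_mul]
  simpa [d, conjPow_zero] using
    congrArg Subtype.val (pow_seven_eq_one_of_shift_relation hper hrec)
end

section
/- Let G be a metabelian group with a, c ∈ G such that a^6 ∈ G' and c ∈ G'. Suppose G embeds in a group H containing an element x with x · (x^a)^{-1} · x^{a^2} = c. Then c · c^a · (c^{a^3})^{-1} · (c^{a^4})^{-1} lies in the second derived subgroup H'' of H. -/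
/-!
Work in `Q = H ⧸ H''`, whose commutator subgroup `Q'` is abelian. Modulo `Q'` the relation
`x (x^a)⁻¹ x^{a²} = c` reduces to `x = c`, so `x ∈ Q'`. Conjugation by `a` is then an
automorphism `σ` of the abelian group `Q'` with `σ⁶ x = x` (as `a⁶ ∈ Q'`), and
`c = (1 - σ + σ²) x`, whence `(1 + σ - σ³ - σ⁴) c = (1 - σ⁶) x = 0`.
-/

theorem MulAut.eq_one_of_pow_six_apply_eq_self {M : Type*} [CommGroup M] (σ : MulAut M)
    {x c : M} (hx : (σ ^ 6) x = x) (hc : x * (σ x)⁻¹ * (σ ^ 2) x = c) :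
    c * σ c * ((σ ^ 3) c)⁻¹ * ((σ ^ 4) c)⁻¹ = 1 := by
  have hpow (m n : ℕ) : (σ ^ m) ((σ ^ n) x) = (σ ^ (m + n)) x := by
    rw [← MulAut.mul_apply, ← pow_add]
  have hsucc (n : ℕ) : σ ((σ ^ n) x) = (σ ^ (n + 1)) x := by
    simpa [add_comm] using hpow 1 n
  have hone : σ x = (σ ^ 1) x := by rw [pow_one]
  subst hc
  -- `(1 - σ + σ²)(1 + σ - σ³ - σ⁴) = 1 - σ⁶`
  simp only [map_mul, map_inv, hpow, hsucc, hone, Nat.reduceAdd, hx]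
  apply Additive.ofMul.injective
  simp only [ofMul_mul, ofMul_inv, ofMul_one]
  abel

theorem MulAut.coe_conjNormal_inv_pow_apply {G : Type*} [Group G] {N : Subgroup G} [N.Normal]
    (a : G) (n : ℕ) (y : N) : ((MulAut.conjNormal a⁻¹ ^ n) y : G) = (a ^ n)⁻¹ * y * a ^ n := by
  rw [← map_pow, MulAut.conjNormal_apply, inv_pow, inv_inv]

theorem MonoidHom.map_mem_commutator {G H : Type*} [Group G] [Group H] (f : G →* H) {g : G}
    (hg : g ∈ commutator G) : f g ∈ commutator H := by
  rw [← derivedSeries_one] at hg ⊢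
  exact map_derivedSeries_le_derivedSeries f 1 (Subgroup.mem_map_of_mem f hg)

theorem mem_commutator_of_mul_conj_inv_mul_conj_mem {G : Type*} [Group G] {a x : G}
    (h : x * (a⁻¹ * x * a)⁻¹ * ((a ^ 2)⁻¹ * x * a ^ 2) ∈ commutator G) : x ∈ commutator G := by
  rw [← Abelianization.ker_of, MonoidHom.mem_ker] at h ⊢
  simpa using h

open scoped IsMulCommutative in
theorem conj_relation_of_isMulCommutative_commutator {Q : Type*} [Group Q]
    [IsMulCommutative (commutator Q)] {a x c : Q} (ha : a ^ 6 ∈ commutator Q)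
    (hc : c ∈ commutator Q) (hx : x * (a⁻¹ * x * a)⁻¹ * ((a ^ 2)⁻¹ * x * a ^ 2) = c) :
    c * (a⁻¹ * c * a) * ((a ^ 3)⁻¹ * c * a ^ 3)⁻¹ * ((a ^ 4)⁻¹ * c * a ^ 4)⁻¹ = 1 := by
  have hxQ : x ∈ commutator Q := mem_commutator_of_mul_conj_inv_mul_conj_mem (hx ▸ hc)
  let σ : MulAut (commutator Q) := MulAut.conjNormal a⁻¹
  have hσ (y : commutator Q) : (σ y : Q) = a⁻¹ * y * a := by simp [σ]
  have hσpow (n : ℕ) (y : commutator Q) : ((σ ^ n) y : Q) = (a ^ n)⁻¹ * y * a ^ n :=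
    MulAut.coe_conjNormal_inv_pow_apply a n y
  have h6 : (σ ^ 6) ⟨x, hxQ⟩ = ⟨x, hxQ⟩ := by
    have hcomm := mul_comm (⟨a ^ 6, ha⟩ : commutator Q) ⟨x, hxQ⟩
    apply Subtype.ext
    rw [hσpow, mul_assoc, inv_mul_eq_iff_eq_mul]
    exact (congrArg Subtype.val hcomm).symm
  have key := σ.eq_one_of_pow_six_apply_eq_self (c := ⟨c, hc⟩) h6
    (Subtype.ext (by simpa [hσ, hσpow] using hx))
  simpa [hσ, hσpow] using congrArg Subtype.val key

instance isMulCommutative_commutator_quotient_derivedSeries_two (H : Type*) [Group H] :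
    IsMulCommutative (commutator (H ⧸ derivedSeries H 2)) := by
  rw [← Subgroup.commutator_self_eq_bot_iff, ← derivedSeries_one, ← derivedSeries_succ,
    ← map_derivedSeries_eq (QuotientGroup.mk'_surjective _), QuotientGroup.map_mk'_self]

theorem stmt_8_general {G H : Type*} [Group G] [Group H]
    (a c : G) (ha : a ^ 6 ∈ commutator G) (hc : c ∈ commutator G)
    (f : G →* H) (x : H)
    (hx : x * ((f a)⁻¹ * x * f a)⁻¹ * ((f a ^ 2)⁻¹ * x * f a ^ 2) = f c) :
    f c * ((f a)⁻¹ * f c * f a) * ((f a ^ 3)⁻¹ * f c * f a ^ 3)⁻¹ *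
      ((f a ^ 4)⁻¹ * f c * f a ^ 4)⁻¹ ∈ derivedSeries H 2 := by
  let π := QuotientGroup.mk' (derivedSeries H 2)
  have hπ {g : G} (hg : g ∈ commutator G) : π (f g) ∈ commutator (H ⧸ derivedSeries H 2) :=
    π.map_mem_commutator (f.map_mem_commutator hg)
  have hxπ := congrArg π hx
  rw [← QuotientGroup.eq_one_iff, ← QuotientGroup.mk'_apply]
  simp only [map_mul, map_inv, map_pow] at hxπ ⊢
  exact conj_relation_of_isMulCommutative_commutator (by simpa only [map_pow] using hπ ha) (hπ hc)
    hxπ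

theorem stmt_8 {G H : Type*} [Group G] [Group H]
    (hmet : ∀ x ∈ commutator G, ∀ y ∈ commutator G, x * y = y * x)
    (a c : G) (ha : a ^ 6 ∈ commutator G) (hc : c ∈ commutator G)
    (f : G →* H) (hf : Function.Injective f) (x : H)
    (hx : x * ((f a)⁻¹ * x * f a)⁻¹ * ((f a ^ 2)⁻¹ * x * f a ^ 2) = f c) :
    f c * ((f a)⁻¹ * f c * f a) * ((f a ^ 3)⁻¹ * f c * f a ^ 3)⁻¹ *
      ((f a ^ 4)⁻¹ * f c * f a ^ 4)⁻¹ ∈ derivedSeries H 2 :=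
  stmt_8_general a c ha hc f x hx
end

section
/- Let G be a metabelian group with a, c ∈ G such that a^6 ∈ G', c ∈ G', and c · c^a · (c^{a^3})^{-1} · (c^{a^4})^{-1} ≠ 1. Then the equation x · (x^a)^{-1} · x^{a^2} = c over G has no solution in any metabelian group containing G. -/
/-!
Let `x` solve the equation in a metabelian group `H` and write `σ` for conjugation by `a`.
Modulo `H'` the equation reads `x = c = 1`, so `x ∈ H'`. On the abelian group `H'` the equation is
`(1 - σ + σ²) x = c`, and `(1 + σ - σ³ - σ⁴)(1 - σ + σ²) = 1 - σ⁶`. Since `a⁶ ∈ H'` commutes with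
`x ∈ H'`, `σ⁶ x = x`, hence `c · c^a · (c^{a³})⁻¹ · (c^{a⁴})⁻¹ = 1`.
-/

open scoped IsMulCommutative

theorem mul_mul_inv_mul_inv_eq_of_recurrence {M : Type*} [CommGroup M] {y c : ℕ → M}
    (h : ∀ k, y k * (y (k + 1))⁻¹ * y (k + 2) = c k) :
    c 0 * c 1 * (c 3)⁻¹ * (c 4)⁻¹ = y 0 * (y 6)⁻¹ := by
  simp only [← h]
  apply Additive.ofMul.injective
  simp only [ofMul_mul, ofMul_inv]
  abel

theorem isMulCommutative_commutator_of_derivedSeries_two_eq_bot {H : Type*} [Group H]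
    (hH : derivedSeries H 2 = ⊥) : IsMulCommutative (commutator H) := by
  rw [← Subgroup.le_centralizer_iff_isMulCommutative,
    ← Subgroup.commutator_eq_bot_iff_le_centralizer]
  rwa [derivedSeries_succ, derivedSeries_one] at hH

theorem mem_commutator_of_mul_inv_conj_mul_conj_eq {H : Type*} [Group H] {a x c : H}
    (hc : c ∈ commutator H) (hx : x * (a⁻¹ * x * a)⁻¹ * ((a ^ 2)⁻¹ * x * a ^ 2) = c) :
    x ∈ commutator H := by
  rw [← Abelianization.ker_of, MonoidHom.mem_ker] at hc ⊢
  rw [← hc, ← hx]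
  apply Additive.ofMul.injective
  simp only [map_mul, map_inv, map_pow, ofMul_mul, ofMul_inv, ofMul_pow]
  abel

theorem mul_conj_mul_inv_conj_mul_inv_conj_eq_one_of_solution {H : Type*} [Group H]
    (hH : derivedSeries H 2 = ⊥) {a x c : H}
    (ha : a ^ 6 ∈ commutator H) (hc : c ∈ commutator H)
    (hx : x * (a⁻¹ * x * a)⁻¹ * ((a ^ 2)⁻¹ * x * a ^ 2) = c) :
    c * (a⁻¹ * c * a) * ((a ^ 3)⁻¹ * c * a ^ 3)⁻¹ * ((a ^ 4)⁻¹ * c * a ^ 4)⁻¹ = 1 := by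
  have := isMulCommutative_commutator_of_derivedSeries_two_eq_bot hH
  have hxK := mem_commutator_of_mul_inv_conj_mul_conj_eq hc hx
  let conjPow (z : commutator H) (k : ℕ) : commutator H :=
    ⟨(a ^ k)⁻¹ * z * a ^ k, Subgroup.Normal.conj_mem' inferInstance _ z.2 _⟩
  have hrec : ∀ k, conjPow ⟨x, hxK⟩ k * (conjPow ⟨x, hxK⟩ (k + 1))⁻¹ *
      conjPow ⟨x, hxK⟩ (k + 2) = conjPow ⟨c, hc⟩ k := by
    intro k
    ext
    simp only [conjPow, Subgroup.coe_mul, Subgroup.coe_inv]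
    rw [← hx]
    group
  have hperiod : conjPow ⟨x, hxK⟩ 6 = conjPow ⟨x, hxK⟩ 0 := by
    ext
    simp only [conjPow, pow_zero, inv_one, one_mul, mul_one]
    rw [mul_assoc, setLike_mul_comm hxK ha, inv_mul_cancel_left]
  simpa [conjPow, hperiod] using congrArg Subtype.val (mul_mul_inv_mul_inv_eq_of_recurrence hrec)

theorem stmt_9_general {G : Type*} [Group G]
    (a c : G) (ha : a ^ 6 ∈ commutator G) (hc : c ∈ commutator G)
    (hne : c * (a⁻¹ * c * a) * ((a ^ 3)⁻¹ * c * a ^ 3)⁻¹ * ((a ^ 4)⁻¹ * c * a ^ 4)⁻¹ ≠ 1)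
    {H : Type*} [Group H] (f : G →* H) (hf : Function.Injective f)
    (hH : derivedSeries H 2 = ⊥) :
    ¬ ∃ x : H, x * ((f a)⁻¹ * x * f a)⁻¹ * ((f a ^ 2)⁻¹ * x * f a ^ 2) = f c := by
  rintro ⟨x, hx⟩
  have hmap {g : G} (hg : g ∈ commutator G) : f g ∈ commutator H :=
    map_derivedSeries_le_derivedSeries f 1 (Subgroup.mem_map_of_mem f hg)
  apply hne
  apply hf
  simpa using mul_conj_mul_inv_conj_mul_inv_conj_eq_one_of_solution hH
    (by simpa using hmap ha) (hmap hc) hx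

theorem stmt_9 {G : Type*} [Group G]
    (hmet : ∀ x ∈ commutator G, ∀ y ∈ commutator G, x * y = y * x)
    (a c : G) (ha : a ^ 6 ∈ commutator G) (hc : c ∈ commutator G)
    (hne : c * (a⁻¹ * c * a) * ((a ^ 3)⁻¹ * c * a ^ 3)⁻¹ * ((a ^ 4)⁻¹ * c * a ^ 4)⁻¹ ≠ 1)
    {H : Type*} [Group H] (f : G →* H) (hf : Function.Injective f)
    (hH : derivedSeries H 2 = ⊥) :
    ¬ ∃ x : H, x * ((f a)⁻¹ * x * f a)⁻¹ * ((f a ^ 2)⁻¹ * x * f a ^ 2) = f c :=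
  stmt_9_general a c ha hc hne f hf hH
end

section
/- Let G be a metabelian group with a, c ∈ G such that a^6 ∈ G', c ∈ G', and g := c·c^a·(c^{a^3})^{-1}·(c^{a^4})^{-1} ≠ 1. If c has finite order n coprime to 6, then g has finite order coprime to 6, g^{a^3} = g^{-1}, and g·(g^a)^{-1}·g^{a^2} = 1. -/
/-!
Since `G'` is abelian and normal, conjugation by `a` restricts to an automorphism `σ` of `G'`
(with `c ^ σ = a⁻¹ c a`), and `σ ^ 6 = 1` because `a ^ 6 ∈ G'` acts trivially on the abelian
group `G'`. In exponential group-ring notation `g = c ^ ((1 + σ)(1 - σ³))`, so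
`g ^ (σ³) = c ^ ((1 + σ)(σ³ - σ⁶)) = g⁻¹` and
`g ^ (1 - σ + σ²) = c ^ ((1 + σ³)(1 - σ³)) = c ^ (1 - σ⁶) = 1`.
As a product of conjugates of `c` in an abelian group, `g` has order dividing that of `c`.
-/

open scoped IsMulCommutative

namespace MulAut

section CommGroup

variable {H : Type*} [CommGroup H]

/-- The element `c ^ ((1 + σ)(1 - σ³))`, in exponential group-ring notation. -/
def twistedWord (σ : MulAut H) (c : H) : H :=
  c * σ c * ((σ ^ 3) c)⁻¹ * ((σ ^ 4) c)⁻¹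

variable (σ : MulAut H) (c : H)

lemma pow_apply_twistedWord (k : ℕ) :
    (σ ^ k) (twistedWord σ c) =
      (σ ^ k) c * (σ ^ (k + 1)) c * ((σ ^ (k + 3)) c)⁻¹ * ((σ ^ (k + 4)) c)⁻¹ := by
  simp only [twistedWord, map_mul, map_inv, pow_add, mul_apply, pow_one]

lemma pow_three_apply_twistedWord (hσ : σ ^ 6 = 1) :
    (σ ^ 3) (twistedWord σ c) = (twistedWord σ c)⁻¹ := by
  have hσ7 : σ ^ 7 = σ := by rw [pow_succ, hσ, one_mul]
  rw [pow_apply_twistedWord]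
  simp only [Nat.reduceAdd, hσ, hσ7, one_apply, twistedWord]
  simp [mul_comm, mul_assoc]

lemma twistedWord_mul_inv_apply_mul_pow_two_apply (hσ : σ ^ 6 = 1) :
    twistedWord σ c * (σ (twistedWord σ c))⁻¹ * (σ ^ 2) (twistedWord σ c) = 1 := by
  have hσ1 := pow_apply_twistedWord σ c 1
  rw [pow_one] at hσ1
  rw [hσ1, pow_apply_twistedWord]
  simp only [Nat.reduceAdd, hσ, one_apply, twistedWord]
  apply Additive.ofMul.injective
  simp only [ofMul_mul, ofMul_inv, ofMul_one]
  abel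

lemma orderOf_twistedWord_dvd : orderOf (twistedWord σ c) ∣ orderOf c := by
  apply orderOf_dvd_of_pow_eq_one
  simp only [twistedWord, mul_pow, inv_pow, ← map_pow, pow_orderOf_eq_one, map_one, inv_one,
    mul_one]

end CommGroup

variable {G : Type*} [Group G] {N : Subgroup G} [N.Normal]

lemma conjNormal_eq_one_of_mem [IsMulCommutative N] {n : G} (hn : n ∈ N) :
    (conjNormal n : MulAut N) = 1 := by
  ext y
  simp [setLike_mul_comm hn y.2]

lemma coe_inv_conjNormal_pow_apply (a : G) (k : ℕ) (y : N) :
    (((conjNormal a : MulAut N)⁻¹ ^ k) y : G) = (a ^ k)⁻¹ * y * a ^ k := by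
  rw [inv_pow, ← map_pow, conjNormal_inv_apply]

end MulAut

theorem stmt_13_general {G : Type*} [Group G]
    (hmet : ∀ x ∈ commutator G, ∀ y ∈ commutator G, x * y = y * x)
    (a c : G) (ha : a ^ 6 ∈ commutator G) (hc : c ∈ commutator G)
    (g : G)
    (hg : g = c * (a⁻¹ * c * a) * ((a ^ 3)⁻¹ * c * a ^ 3)⁻¹ * ((a ^ 4)⁻¹ * c * a ^ 4)⁻¹)
    (hcop : Nat.Coprime (orderOf c) 6) :
    IsOfFinOrder g ∧ Nat.Coprime (orderOf g) 6 ∧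
      (a ^ 3)⁻¹ * g * a ^ 3 = g⁻¹ ∧
      g * (a⁻¹ * g * a)⁻¹ * ((a ^ 2)⁻¹ * g * a ^ 2) = 1 := by
  have : IsMulCommutative (commutator G) := ⟨⟨fun x y => Subtype.ext (hmet x x.2 y y.2)⟩⟩
  set σ : MulAut (commutator G) := (MulAut.conjNormal a)⁻¹
  have hσ : σ ^ 6 = 1 := by rw [inv_pow, ← map_pow, MulAut.conjNormal_eq_one_of_mem ha, inv_one]
  have hconj (k : ℕ) (y : commutator G) : (a ^ k)⁻¹ * y * a ^ k = ((σ ^ k) y : G) :=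
    (MulAut.coe_inv_conjNormal_pow_apply a k y).symm
  have hσ1 (y : commutator G) : a⁻¹ * y * a = (σ y : G) := by simpa using hconj 1 y
  have hgw : g = MulAut.twistedWord σ ⟨c, hc⟩ := by
    simp [hg, MulAut.twistedWord, ← hconj, ← hσ1]
  have hcop_g : (orderOf g).Coprime 6 := by
    refine hcop.coprime_dvd_left ?_
    rw [hgw, Subgroup.orderOf_coe, ← Subgroup.orderOf_mk c hc]
    exact MulAut.orderOf_twistedWord_dvd σ _
  refine ⟨orderOf_pos_iff.mp (Nat.pos_of_ne_zero fun h => by simp [h] at hcop_g), hcop_g, ?_, ?_⟩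
  · rw [hgw, hconj, MulAut.pow_three_apply_twistedWord σ _ hσ, Subgroup.coe_inv]
  · rw [hgw, hconj, hσ1, ← Subgroup.coe_inv, ← Subgroup.coe_mul, ← Subgroup.coe_mul,
      MulAut.twistedWord_mul_inv_apply_mul_pow_two_apply σ _ hσ, Subgroup.coe_one]

theorem stmt_13 {G : Type*} [Group G]
    (hmet : ∀ x ∈ commutator G, ∀ y ∈ commutator G, x * y = y * x)
    (a c : G) (ha : a ^ 6 ∈ commutator G) (hc : c ∈ commutator G)
    (g : G)
    (hg : g = c * (a⁻¹ * c * a) * ((a ^ 3)⁻¹ * c * a ^ 3)⁻¹ * ((a ^ 4)⁻¹ * c * a ^ 4)⁻¹)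
    (hg1 : g ≠ 1)
    (hfin : IsOfFinOrder c) (hcop : Nat.Coprime (orderOf c) 6) :
    IsOfFinOrder g ∧ Nat.Coprime (orderOf g) 6 ∧
      (a ^ 3)⁻¹ * g * a ^ 3 = g⁻¹ ∧
      g * (a⁻¹ * g * a)⁻¹ * ((a ^ 2)⁻¹ * g * a ^ 2) = 1 :=
  stmt_13_general hmet a c ha hc g hg hcop
end

section
/- Let G be a metabelian group with a, c ∈ G such that a^6 ∈ G', c ∈ G', and g := c·c^a·(c^{a^3})^{-1}·(c^{a^4})^{-1} ≠ 1. If c has finite order coprime to 6, then g·g^a·(g^{a^3})^{-1}·(g^{a^4})^{-1} ≠ 1. -/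
/-!
Write the abelian normal subgroup `N` additively, as a module over `ℤ[t]` with `t` acting by
`y ↦ a⁻¹ * y * a`; then `t ^ 6 = 1` because `a ^ 6 ∈ N`. For `P = 1 + t - t ^ 3 - t ^ 4` the
identity `6 P - (2 - t) P ^ 2 = (2 - (t - 2) (1 + t) ^ 2) (1 - t ^ 6)` in `ℤ[t]` gives
`6 P = (2 - t) P ^ 2` on `N`. So `P ^ 2 c = 0` forces `6 • P c = 0`, and as the order of `P c`
divides the order of `c`, which is prime to `6`, `P c = 0`.
-/

open Polynomial in
theorem six_mul_eq_of_pow_six_eq_one {R : Type*} [Ring R] {s : R} (hs : s ^ 6 = 1) :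
    6 * (1 + s - s ^ 3 - s ^ 4) = (2 - s) * (1 + s - s ^ 3 - s ^ 4) ^ 2 := by
  have key := congrArg (aeval s)
    (show (6 * (1 + X - X ^ 3 - X ^ 4) - (2 - X) * (1 + X - X ^ 3 - X ^ 4) ^ 2 : ℤ[X]) =
      (2 - (X - 2) * (1 + X) ^ 2) * (1 - X ^ 6) by ring)
  simp only [map_sub, map_mul, map_add, map_pow, map_ofNat, map_one, aeval_X, hs, sub_self,
    mul_zero] at key
  exact sub_eq_zero.mp key

theorem smul_eq_zero_of_sq_smul_eq_zero_of_pow_six_eq_one {R M : Type*} [Ring R] [AddCommGroup M]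
    [Module R M] {s : R} (hs : s ^ 6 = 1) {x : M} (hx : (addOrderOf x).Coprime 6)
    (h : (1 + s - s ^ 3 - s ^ 4) ^ 2 • x = 0) : (1 + s - s ^ 3 - s ^ 4) • x = 0 := by
  set p := 1 + s - s ^ 3 - s ^ 4
  have h6 : 6 • (p • x) = 0 := by
    rw [← ofNat_smul_eq_nsmul R, smul_smul, six_mul_eq_of_pow_six_eq_one hs, mul_smul, h,
      smul_zero]
  have hdvd : addOrderOf (p • x) ∣ addOrderOf x :=
    addOrderOf_dvd_of_nsmul_eq_zero (by rw [smul_comm, addOrderOf_nsmul_eq_zero, smul_zero])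
  exact AddMonoid.addOrderOf_eq_one_iff.mp <| Nat.Coprime.eq_one_of_dvd
    (hx.coprime_dvd_left hdvd) (addOrderOf_dvd_of_nsmul_eq_zero h6)

open scoped IsMulCommutative

section
variable {G : Type*} [Group G] (N : Subgroup G) [N.Normal] [IsMulCommutative N]

def conjAddEnd (a : G) : AddMonoid.End (Additive N) :=
  MonoidHom.toAdditive (MulAut.conjNormal a⁻¹).toMonoidHom

theorem coe_toMul_conjAddEnd_pow_smul (a : G) (k : ℕ) (x : N) :
    ((Additive.toMul (conjAddEnd N a ^ k • Additive.ofMul x) : N) : G) =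
      (a ^ k)⁻¹ * x * a ^ k := by
  induction k generalizing x with
  | zero => simp
  | succ k ih =>
    have hstep : conjAddEnd N a • Additive.ofMul x =
        Additive.ofMul (MulAut.conjNormal a⁻¹ x) := rfl
    rw [pow_succ, mul_smul, hstep, ih, MulAut.conjNormal_apply]
    group

theorem conjAddEnd_pow_six {a : G} (ha : a ^ 6 ∈ N) : conjAddEnd N a ^ 6 = 1 := by
  refine AddMonoidHom.ext fun y => Additive.toMul.injective ?_
  apply Subtype.ext
  change ((Additive.toMul (conjAddEnd N a ^ 6 • Additive.ofMul (Additive.toMul y)) : N) : G) = _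
  rw [coe_toMul_conjAddEnd_pow_smul, mul_assoc, setLike_mul_comm (Additive.toMul y).2 ha,
    inv_mul_cancel_left]
  rfl

/-- `y ^ (1 + a - a ^ 3 - a ^ 4)` in exponential notation, where `y ^ a = a⁻¹ * y * a`. -/
def conjPoly (a y : G) : G :=
  y * (a⁻¹ * y * a) * ((a ^ 3)⁻¹ * y * a ^ 3)⁻¹ * ((a ^ 4)⁻¹ * y * a ^ 4)⁻¹

theorem coe_toMul_conjAddEnd_poly_smul (a : G) (x : N) :
    ((Additive.toMul ((1 + conjAddEnd N a - conjAddEnd N a ^ 3 - conjAddEnd N a ^ 4) •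
      Additive.ofMul x) : N) : G) = conjPoly a x := by
  have h1 := coe_toMul_conjAddEnd_pow_smul N a 1 x
  rw [pow_one, pow_one] at h1
  simp only [sub_smul, add_smul, one_smul, toMul_sub, toMul_add, toMul_ofMul, div_eq_mul_inv,
    Subgroup.coe_mul, Subgroup.coe_inv, coe_toMul_conjAddEnd_pow_smul, h1]
  rfl

variable {N}

theorem conjPoly_eq_one_of_conjPoly_conjPoly_eq_one {a x : G} (ha : a ^ 6 ∈ N) (hx : x ∈ N)
    (hcop : (orderOf x).Coprime 6) (h : conjPoly a (conjPoly a x) = 1) : conjPoly a x = 1 := by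
  set p := 1 + conjAddEnd N a - conjAddEnd N a ^ 3 - conjAddEnd N a ^ 4
  set y : Additive N := Additive.ofMul ⟨x, hx⟩
  have hpy : ((Additive.toMul (p • y) : N) : G) = conjPoly a x :=
    coe_toMul_conjAddEnd_poly_smul N a _
  have hp2y : p ^ 2 • y = 0 := by
    refine Additive.toMul.injective (Subtype.ext ?_)
    rw [sq, mul_smul, ← ofMul_toMul (p • y), coe_toMul_conjAddEnd_poly_smul, hpy, h]
    rfl
  have hy : (addOrderOf y).Coprime 6 := by
    rwa [addOrderOf_ofMul_eq_orderOf, Subgroup.orderOf_mk]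
  rw [← hpy, smul_eq_zero_of_sq_smul_eq_zero_of_pow_six_eq_one (conjAddEnd_pow_six N ha) hy hp2y]
  rfl

end

theorem stmt_14_general {G : Type*} [Group G]
    (hmet : ∀ x ∈ commutator G, ∀ y ∈ commutator G, x * y = y * x)
    (a c : G) (ha : a ^ 6 ∈ commutator G) (hc : c ∈ commutator G)
    (g : G)
    (hg : g = c * (a⁻¹ * c * a) * ((a ^ 3)⁻¹ * c * a ^ 3)⁻¹ * ((a ^ 4)⁻¹ * c * a ^ 4)⁻¹)
    (hg1 : g ≠ 1)
    (hcop : Nat.Coprime (orderOf c) 6) :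
    g * (a⁻¹ * g * a) * ((a ^ 3)⁻¹ * g * a ^ 3)⁻¹ * ((a ^ 4)⁻¹ * g * a ^ 4)⁻¹ ≠ 1 := by
  have : IsMulCommutative (commutator G) := IsMulCommutative.of_setLike_mul_comm hmet
  subst hg
  exact fun h => hg1 (conjPoly_eq_one_of_conjPoly_conjPoly_eq_one ha hc hcop h)

theorem stmt_14 {G : Type*} [Group G]
    (hmet : ∀ x ∈ commutator G, ∀ y ∈ commutator G, x * y = y * x)
    (a c : G) (ha : a ^ 6 ∈ commutator G) (hc : c ∈ commutator G)
    (g : G)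
    (hg : g = c * (a⁻¹ * c * a) * ((a ^ 3)⁻¹ * c * a ^ 3)⁻¹ * ((a ^ 4)⁻¹ * c * a ^ 4)⁻¹)
    (hg1 : g ≠ 1)
    (hfin : IsOfFinOrder c) (hcop : Nat.Coprime (orderOf c) 6) :
    g * (a⁻¹ * g * a) * ((a ^ 3)⁻¹ * g * a ^ 3)⁻¹ * ((a ^ 4)⁻¹ * g * a ^ 4)⁻¹ ≠ 1 :=
  stmt_14_general hmet a c ha hc g hg hg1 hcop
end

section
/- In the group G = (⟨b⟩_n × ⟨d⟩_n) ⋊ ⟨a⟩_6 with b^a = bd, d^a = b^{-1}, set c = b and g = c·c^a·(c^{a^3})^{-1}·(c^{a^4})^{-1}. Then g = b^4 d^2 and g·g^a·(g^{a^3})^{-1}·(g^{a^4})^{-1} = b^{12} d^{12}. In particular, if n = 3 or n = 4, then g ≠ 1 but g·g^a·(g^{a^3})^{-1}·(g^{a^4})^{-1} = 1. -/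
/-!
`AddAut` is an additive group under composition, so `k • σ` is the `k`-fold composite `σᵏ`.
For `σ = sigmaAut n` one has `σ³ v = -v` (the element `a³` inverts the base), so the word
`v ↦ v + σ v - σ³ v - σ⁴ v` collapses to `v ↦ 2 (v + σ v)`. Applying it to `c = (1, 0)` gives
`(4, 2)`, and applying it again gives `(12, 12)`, which vanishes exactly when `n ∣ 12`.
-/

/-- The automorphism of `⟨b⟩ₙ × ⟨d⟩ₙ` (written additively as `ZMod n × ZMod n`)
given by `b ↦ bd`, `d ↦ b⁻¹`, i.e. `(x, y) ↦ (x - y, x)`; in the semidirect product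
`(⟨b⟩ₙ × ⟨d⟩ₙ) ⋊ ⟨a⟩₆` conjugation by `a` acts on the base by this automorphism,
so `c^(aᵏ)` corresponds to `(sigmaAut n)^k` applied to `c`. -/
def sigmaAut (n : ℕ) : AddAut (ZMod n × ZMod n) where
  toFun p := (p.1 - p.2, p.1)
  invFun p := (p.2, p.2 - p.1)
  left_inv := by intro p; simp
  right_inv := by intro p; simp
  map_add' := by intro p q; simp [Prod.ext_iff]; ring

section

variable {n : ℕ}

@[simp]
theorem sigmaAut_apply (p : ZMod n × ZMod n) : sigmaAut n p = (p.1 - p.2, p.1) := rfl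

theorem three_nsmul_sigmaAut_apply (p : ZMod n × ZMod n) : (3 • sigmaAut n) p = -p := by
  ext <;> simp [succ_nsmul]
  abel

theorem four_nsmul_sigmaAut_apply (p : ZMod n × ZMod n) :
    (4 • sigmaAut n) p = -sigmaAut n p := by
  rw [succ_nsmul, AddAut.add_apply, three_nsmul_sigmaAut_apply]

theorem add_sigmaAut_sub_sub (p : ZMod n × ZMod n) :
    p + sigmaAut n p - (3 • sigmaAut n) p - (4 • sigmaAut n) p = 2 • (p + sigmaAut n p) := by
  rw [three_nsmul_sigmaAut_apply, four_nsmul_sigmaAut_apply]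
  abel

end

theorem stmt_16 (n : ℕ)
    (c : ZMod n × ZMod n) (hc : c = (1, 0))
    (g : ZMod n × ZMod n)
    (hg : g = c + sigmaAut n c - (3 • sigmaAut n) c - (4 • sigmaAut n) c) :
    g = (4, 2) ∧
    g + sigmaAut n g - (3 • sigmaAut n) g - (4 • sigmaAut n) g = (12, 12) ∧
    ((n = 3 ∨ n = 4) →
      g ≠ 0 ∧ g + sigmaAut n g - (3 • sigmaAut n) g - (4 • sigmaAut n) g = 0) := by
  have hg' : g = (4, 2) := by
    rw [hg, add_sigmaAut_sub_sub, hc]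
    ext <;> norm_num
  have hgg : g + sigmaAut n g - (3 • sigmaAut n) g - (4 • sigmaAut n) g = (12, 12) := by
    rw [add_sigmaAut_sub_sub, hg']
    ext <;> norm_num
  refine ⟨hg', hgg, ?_⟩
  rw [hgg, hg']
  rintro (rfl | rfl) <;> decide
end

section
/- For every integer n ≥ 2 there exists a solvable group H of derived length exactly n, elements a, c ∈ H, and a unimodular equation x·(x^a)^{-1}·x^{a^2} = c over H, such that for every group K ⊇ H containing a solution x of this equation, the n-th derived subgroup K^{(n)} is nontrivial; i.e., the equation has no solution in any solvable group of derived length n. -/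
/-!
Take `H = B ≀ G`, where `G = C₇ ⋊ C₆` is the Frobenius group of order 42 (metabelian) and `B` is
an iterated wreath product of `C₂` of derived length `n - 2`; then `H` has derived length `n`.
Let `x` solve `x (x^a)⁻¹ x^(a²) = c` in `K ⊇ H`. Since `c ∈ K'`, abelianizing `K` gives `x ∈ K'`.
Conjugation `σ` by `a` acts on the abelianization of `K'` with `σ⁶ = 1`, and
`(1 + σ - σ³ - σ⁴)(1 - σ + σ²) = 1 - σ⁶`, so `γ = c c^a (c^(a³))⁻¹ (c^(a⁴))⁻¹ ∈ K''`; as `γ ≠ 1`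
this settles `n = 2`. For `n ≥ 3`, the iterated commutators of base elements with `a`, `c` and `γ`
lie in `K'''` and take every value `b ∈ B` at the coordinate `1`, so the subgroup they generate
maps onto `B`, and its `(n - 3)`-th derived subgroup is a nontrivial subgroup of `K⁽ⁿ⁾`.
-/

open scoped commutatorElement

section DerivedSeries

variable {G N Q : Type*} [Group G] [Group N] [Group Q]

theorem map_derivedSeries_le_derivedSeries_add (φ : N →* G) {k : ℕ}
    (h : φ.range ≤ derivedSeries G k) (m : ℕ) :
    (derivedSeries N m).map φ ≤ derivedSeries G (k + m) := by
  induction m with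
  | zero => rwa [derivedSeries_zero, ← MonoidHom.range_eq_map]
  | succ m ih =>
    rw [← add_assoc, derivedSeries_succ, derivedSeries_succ, Subgroup.map_commutator]
    exact Subgroup.commutator_mono ih ih

theorem derivedSeries_add_le_map (ι : N →* G) {j : ℕ} (h : derivedSeries G j ≤ ι.range)
    (m : ℕ) : derivedSeries G (j + m) ≤ (derivedSeries N m).map ι := by
  induction m with
  | zero => rwa [derivedSeries_zero, ← MonoidHom.range_eq_map]
  | succ m ih =>
    rw [← add_assoc, derivedSeries_succ, derivedSeries_succ, Subgroup.map_commutator]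
    exact Subgroup.commutator_mono ih ih

theorem derivedSeries_add_eq_bot_of_ker_le_range (ι : N →* G) (π : G →* Q)
    (hπι : π.ker ≤ ι.range) {j m : ℕ} (hQ : derivedSeries Q j = ⊥)
    (hN : derivedSeries N m = ⊥) : derivedSeries G (j + m) = ⊥ := by
  have hj : derivedSeries G j ≤ ι.range := fun g hg ↦ hπι <| by
    simpa [hQ] using map_derivedSeries_le_derivedSeries π j (Subgroup.mem_map_of_mem π hg)
  simpa [hN] using derivedSeries_add_le_map ι hj m

theorem derivedSeries_ne_bot_of_injective (φ : N →* G) (hφ : Function.Injective φ) {k m : ℕ}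
    (h : φ.range ≤ derivedSeries G k) (hN : derivedSeries N m ≠ ⊥) :
    derivedSeries G (k + m) ≠ ⊥ := by
  intro hG
  apply hN
  have := map_derivedSeries_le_derivedSeries_add φ h m
  rwa [hG, le_bot_iff, Subgroup.map_eq_bot_iff_of_injective _ hφ] at this

theorem derivedSeries_ne_bot_of_surjective (φ : G →* Q) (hφ : Function.Surjective φ) {m : ℕ}
    (hQ : derivedSeries Q m ≠ ⊥) : derivedSeries G m ≠ ⊥ := by
  intro hG
  rw [← map_derivedSeries_eq hφ, hG, Subgroup.map_bot] at hQ
  exact hQ rfl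

theorem Subgroup.ne_bot_of_mem_of_ne_one {S : Subgroup G} {g : G} (hg : g ∈ S) (h1 : g ≠ 1) :
    S ≠ ⊥ :=
  fun h ↦ h1 (Subgroup.mem_bot.1 (h ▸ hg))

theorem commutatorElement_mem_derivedSeries_succ {g h : G} {k : ℕ}
    (hg : g ∈ derivedSeries G k) (hh : h ∈ derivedSeries G k) :
    ⁅g, h⁆ ∈ derivedSeries G (k + 1) := by
  rw [derivedSeries_succ]
  exact Subgroup.commutator_mem_commutator hg hh

theorem commutatorElement_mem_derivedSeries_one (g h : G) : ⁅g, h⁆ ∈ derivedSeries G 1 :=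
  commutatorElement_mem_derivedSeries_succ (Subgroup.mem_top g) (Subgroup.mem_top h)

theorem MulEquiv.derivedSeries_eq_bot_iff (e : G ≃* Q) {m : ℕ} :
    derivedSeries G m = ⊥ ↔ derivedSeries Q m = ⊥ := by
  rw [← map_derivedSeries_eq e.surjective (f := e.toMonoidHom),
    Subgroup.map_eq_bot_iff_of_injective _ e.injective]

theorem derivedSeries_pi_eq_bot {ι : Type*} {D : ι → Type*} [∀ i, Group (D i)] {m : ℕ}
    (h : ∀ i, derivedSeries (D i) m = ⊥) : derivedSeries (∀ i, D i) m = ⊥ := by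
  refine (Subgroup.eq_bot_iff_forall _).2 fun f hf ↦ funext fun i ↦ ?_
  have := map_derivedSeries_le_derivedSeries (Pi.evalMonoidHom D i) m
    (Subgroup.mem_map_of_mem _ hf)
  rwa [h i, Subgroup.mem_bot] at this

theorem derivedSeries_one_eq_bot_of_commGroup (A : Type*) [CommGroup A] :
    derivedSeries A 1 = ⊥ := by
  rw [derivedSeries_one, commutator_eq_bot_iff]
  infer_instance

end DerivedSeries

namespace RegularWreathProduct

variable {D Q K : Type*} [Group D] [Group Q] [Group K]

def ofBase : (Q → D) →* D ≀ᵣ Q where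
  toFun f := ⟨f, 1⟩
  map_one' := rfl
  map_mul' f g := by ext <;> simp

@[simp] theorem left_ofBase (f : Q → D) : (ofBase f).left = f := rfl
@[simp] theorem right_ofBase (f : Q → D) : (ofBase f).right = 1 := rfl

theorem ofBase_injective : Function.Injective (ofBase : (Q → D) →* D ≀ᵣ Q) :=
  fun _ _ h ↦ congrArg left h

theorem inl_injective : Function.Injective (inl : Q →* D ≀ᵣ Q) :=
  fun _ _ h ↦ congrArg right h

theorem ker_rightHom_le_range_ofBase :
    (rightHom : D ≀ᵣ Q →* Q).ker ≤ (ofBase : (Q → D) →* D ≀ᵣ Q).range :=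
  fun w hw ↦ ⟨w.left, by ext <;> simp_all⟩

theorem derivedSeries_add_eq_bot {j m : ℕ} (hQ : derivedSeries Q j = ⊥)
    (hD : derivedSeries D m = ⊥) : derivedSeries (D ≀ᵣ Q) (j + m) = ⊥ :=
  derivedSeries_add_eq_bot_of_ker_le_range ofBase rightHom ker_rightHom_le_range_ofBase hQ
    (derivedSeries_pi_eq_bot fun _ ↦ hD)

def baseCommutator (f : Q → D) (q : Q) : Q → D := fun x ↦ f x * (f (q⁻¹ * x))⁻¹

theorem ofBase_baseCommutator (f : Q → D) (q : Q) :
    ofBase (baseCommutator f q) = ⁅ofBase f, (inl q : D ≀ᵣ Q)⁆ := by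
  ext x <;> simp [baseCommutator, commutatorElement_def]

theorem derivedSeries_add_ne_bot_of_eval (ψ : D ≀ᵣ Q →* K) (hψ : Function.Injective ψ)
    (F : D → Q → D) (p : Q) (hF : ∀ d, F d p = d) {k m : ℕ}
    (hk : ∀ d, ψ (ofBase (F d)) ∈ derivedSeries K k) (hD : derivedSeries D m ≠ ⊥) :
    derivedSeries K (k + m) ≠ ⊥ := by
  let Γ := Subgroup.closure (Set.range F)
  have hΓ : Γ ≤ (derivedSeries K k).comap (ψ.comp ofBase) :=
    (Subgroup.closure_le _).2 <| Set.range_subset_iff.2 hk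
  refine derivedSeries_ne_bot_of_injective ((ψ.comp ofBase).comp Γ.subtype)
    (hψ.comp ofBase_injective |>.comp Subtype.val_injective) ?_ ?_
  · rintro _ ⟨γ, rfl⟩
    exact hΓ γ.2
  · refine derivedSeries_ne_bot_of_surjective ((Pi.evalMonoidHom _ p).comp Γ.subtype)
      (fun d ↦ ⟨⟨F d, Subgroup.subset_closure ⟨d, rfl⟩⟩, hF d⟩) hD

theorem derivedSeries_succ_ne_bot [Nontrivial Q] {m : ℕ} (hD : derivedSeries D m ≠ ⊥) :
    derivedSeries (D ≀ᵣ Q) (m + 1) ≠ ⊥ := by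
  classical
  rw [add_comm]
  obtain ⟨q, hq⟩ := exists_ne (1 : Q)
  refine derivedSeries_add_ne_bot_of_eval (MonoidHom.id _) Function.injective_id
    (fun d ↦ baseCommutator (Pi.mulSingle 1 d) q) 1 (fun d ↦ by simp [baseCommutator, hq])
    (fun d ↦ ?_) hD
  rw [MonoidHom.id_apply, ofBase_baseCommutator]
  exact commutatorElement_mem_derivedSeries_one _ _

end RegularWreathProduct

namespace IteratedWreathProduct

variable {Q : Type*} [Group Q]

theorem derivedSeries_mul_eq_bot {j : ℕ} (hQ : derivedSeries Q j = ⊥) :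
    ∀ k, derivedSeries (IteratedWreathProduct Q k) (j * k) = ⊥
  | 0 => Subsingleton.elim (α := Subgroup PUnit) _ _
  | k + 1 => by
    rw [mul_add_one, add_comm (j * k)]
    exact RegularWreathProduct.derivedSeries_add_eq_bot hQ (derivedSeries_mul_eq_bot hQ k)

theorem derivedSeries_ne_bot [Nontrivial Q] :
    ∀ k, derivedSeries (IteratedWreathProduct Q (k + 1)) k ≠ ⊥
  | 0 => derivedSeries_ne_bot_of_surjective RegularWreathProduct.rightHom
      (fun q ↦ ⟨RegularWreathProduct.inl q, rfl⟩) (by rw [derivedSeries_zero]; exact top_ne_bot)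
  | k + 1 => RegularWreathProduct.derivedSeries_succ_ne_bot (derivedSeries_ne_bot k)

end IteratedWreathProduct

section Equation

variable {K : Type*} [Group K] {a c x : K}

theorem mem_commutator_of_solution (h : x * (a⁻¹ * x * a)⁻¹ * ((a ^ 2)⁻¹ * x * a ^ 2) = c)
    (hc : c ∈ commutator K) : x ∈ commutator K := by
  rw [← Abelianization.ker_of, MonoidHom.mem_ker] at hc ⊢
  rw [← hc, ← h]
  simp

theorem conj_product_mem_commutator_of_solution {N : Subgroup K} [hN : N.Normal] (hx : x ∈ N)
    (hc : c ∈ N) (ha : a ^ 6 = 1) (h : x * (a⁻¹ * x * a)⁻¹ * ((a ^ 2)⁻¹ * x * a ^ 2) = c) :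
    c * (a⁻¹ * c * a) * ((a ^ 3)⁻¹ * c * a ^ 3)⁻¹ * ((a ^ 4)⁻¹ * c * a ^ 4)⁻¹ ∈ ⁅N, N⁆ := by
  let conj (y : K) (hy : y ∈ N) (i : ℕ) : N :=
    ⟨(a ^ i)⁻¹ * y * a ^ i, by simpa using hN.conj_mem y hy (a ^ i)⁻¹⟩
  let X (i : ℕ) := Abelianization.of (conj x hx i)
  let C (i : ℕ) := Abelianization.of (conj c hc i)
  have hXC (i : ℕ) : X i * (X (i + 1))⁻¹ * X (i + 2) = C i := by
    simp only [X, C, ← map_inv, ← map_mul]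
    congr 1
    ext
    simp only [conj, Subgroup.coe_mul, Subgroup.coe_inv, ← h, pow_succ]
    group
  have hX6 : X 6 = X 0 := by simp [X, conj, ha]
  have hC : C 0 * C 1 * (C 3)⁻¹ * (C 4)⁻¹ = 1 := by
    rw [← hXC 0, ← hXC 1, ← hXC 3, ← hXC 4, hX6]
    apply Additive.ofMul.injective
    simp only [ofMul_mul, ofMul_inv, ofMul_one]
    abel
  have hg : conj c hc 0 * conj c hc 1 * (conj c hc 3)⁻¹ * (conj c hc 4)⁻¹ ∈ commutator N := by
    rw [← Abelianization.ker_of, MonoidHom.mem_ker, ← hC]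
    simp only [C, map_mul, map_inv]
  rw [← N.map_subtype_commutator]
  convert Subgroup.mem_map_of_mem N.subtype hg
  simp [conj]

end Equation

def affineAction (R : Type*) [Ring R] : Rˣ →* MulAut (Multiplicative R) :=
  (MulAutMultiplicative R).symm.toMonoidHom.comp AddAut.mulLeft

abbrev AffineGroup (R : Type*) [Ring R] : Type _ := Multiplicative R ⋊[affineAction R] Rˣ

theorem AffineGroup.derivedSeries_two_eq_bot (R : Type*) [CommRing R] :
    derivedSeries (AffineGroup R) 2 = ⊥ :=
  derivedSeries_add_eq_bot_of_ker_le_range SemidirectProduct.inl SemidirectProduct.rightHom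
    SemidirectProduct.range_inl_eq_ker_rightHom.ge (derivedSeries_one_eq_bot_of_commGroup _)
    (derivedSeries_one_eq_bot_of_commGroup _)

namespace Frobenius42

open RegularWreathProduct

-- `a` has order 6 and `a⁻¹ c a = c⁵`, since conjugation by `a⁻¹` multiplies by `3⁻¹ = 5`.
def a : AffineGroup (ZMod 7) := SemidirectProduct.inr ⟨3, 5, by decide, by decide⟩

def c : AffineGroup (ZMod 7) := SemidirectProduct.inl (Multiplicative.ofAdd 1)

def γ : AffineGroup (ZMod 7) :=
  c * (a⁻¹ * c * a) * ((a ^ 3)⁻¹ * c * a ^ 3)⁻¹ * ((a ^ 4)⁻¹ * c * a ^ 4)⁻¹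

theorem a_pow_six : a ^ 6 = 1 := by decide +kernel

-- `c⁻² a⁻¹ c² a = c⁻² c¹⁰ = c`
theorem c_eq_commutatorElement : c = ⁅c⁻¹ ^ 2, a⁻¹⁆ := by decide +kernel

-- Evaluating the iterated base commutators below at `1` reads `Pi.mulSingle 1 d` at the points
-- `a^(-ε₁) c^(-ε₂) γ^(-ε₃)` with `εᵢ ∈ {0, 1}`; all but the empty product must differ from `1`.
theorem products_ne_one : a ≠ 1 ∧ c ≠ 1 ∧ γ ≠ 1 ∧ a⁻¹ * c⁻¹ ≠ 1 ∧ a⁻¹ * γ⁻¹ ≠ 1 ∧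
    c⁻¹ * γ⁻¹ ≠ 1 ∧ a⁻¹ * (c⁻¹ * γ⁻¹) ≠ 1 := by
  decide +kernel

variable {B K : Type*} [Group B] [Group K]

def baseFamily₂ (d : B) : AffineGroup (ZMod 7) → B :=
  baseCommutator (baseCommutator (Pi.mulSingle 1 d) a) c

def baseFamily₃ (d : B) : AffineGroup (ZMod 7) → B := baseCommutator (baseFamily₂ d) γ

theorem baseFamily₂_apply_one (d : B) : baseFamily₂ d 1 = d := by
  simp [baseFamily₂, baseCommutator, products_ne_one]

theorem baseFamily₃_apply_one (d : B) : baseFamily₃ d 1 = d := by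
  simp [baseFamily₃, baseFamily₂, baseCommutator, products_ne_one]

theorem map_inl_c_mem (ψ : B ≀ᵣ AffineGroup (ZMod 7) →* K) :
    ψ (inl c) ∈ derivedSeries K 1 := by
  rw [c_eq_commutatorElement, map_commutatorElement, map_commutatorElement]
  exact commutatorElement_mem_derivedSeries_one (G := K) _ _

theorem map_ofBase_baseFamily₂_mem (ψ : B ≀ᵣ AffineGroup (ZMod 7) →* K) (d : B) :
    ψ (ofBase (baseFamily₂ d)) ∈ derivedSeries K 2 := by
  rw [baseFamily₂, ofBase_baseCommutator, ofBase_baseCommutator, map_commutatorElement,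
    map_commutatorElement]
  exact commutatorElement_mem_derivedSeries_succ
    (commutatorElement_mem_derivedSeries_one (G := K) _ _) (map_inl_c_mem ψ)

theorem derivedSeries_one_ne_bot : derivedSeries (B ≀ᵣ AffineGroup (ZMod 7)) 1 ≠ ⊥ :=
  Subgroup.ne_bot_of_mem_of_ne_one (map_inl_c_mem (MonoidHom.id _))
    ((map_ne_one_iff inl inl_injective).2 products_ne_one.2.1)

theorem derivedSeries_two_add_ne_bot {m : ℕ} (hB : derivedSeries B m ≠ ⊥) :
    derivedSeries (B ≀ᵣ AffineGroup (ZMod 7)) (2 + m) ≠ ⊥ :=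
  derivedSeries_add_ne_bot_of_eval (MonoidHom.id _) Function.injective_id baseFamily₂ 1
    baseFamily₂_apply_one (map_ofBase_baseFamily₂_mem _) hB

section Solution

variable (f : B ≀ᵣ AffineGroup (ZMod 7) →* K) {x : K}
  (hx : x * ((f (inl a))⁻¹ * x * f (inl a))⁻¹ * ((f (inl a) ^ 2)⁻¹ * x * f (inl a) ^ 2) =
    f (inl c))
include hx

theorem map_inl_γ_mem : f (inl γ) ∈ derivedSeries K 2 := by
  have hc := map_inl_c_mem f
  have hx₁ : x ∈ derivedSeries K 1 := mem_commutator_of_solution hx hc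
  have ha : f (inl a) ^ 6 = 1 := by rw [← map_pow, ← map_pow, a_pow_six, map_one, map_one]
  simpa [γ] using conj_product_mem_commutator_of_solution hx₁ hc ha hx

theorem derivedSeries_two_ne_bot_of_solution (hf : Function.Injective f) :
    derivedSeries K 2 ≠ ⊥ :=
  Subgroup.ne_bot_of_mem_of_ne_one (map_inl_γ_mem f hx)
    ((map_ne_one_iff (f.comp inl) (hf.comp inl_injective)).2 products_ne_one.2.2.1)

theorem derivedSeries_three_add_ne_bot_of_solution (hf : Function.Injective f) {m : ℕ}
    (hB : derivedSeries B m ≠ ⊥) : derivedSeries K (3 + m) ≠ ⊥ := by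
  refine derivedSeries_add_ne_bot_of_eval f hf baseFamily₃ 1 baseFamily₃_apply_one
    (fun d ↦ ?_) hB
  rw [baseFamily₃, ofBase_baseCommutator, map_commutatorElement]
  exact commutatorElement_mem_derivedSeries_succ (map_ofBase_baseFamily₂_mem f d)
    (map_inl_γ_mem f hx)

end Solution

end Frobenius42

open Frobenius42 RegularWreathProduct in
theorem stmt_18 (n : ℕ) (hn : 2 ≤ n) :
    ∃ (H : GrpCat) (a c : H),
      derivedSeries H n = ⊥ ∧ derivedSeries H (n - 1) ≠ ⊥ ∧
      ∀ (K : GrpCat) (f : H →* K), Function.Injective f →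
        ∀ x : K, x * ((f a)⁻¹ * x * f a)⁻¹ * ((f a ^ 2)⁻¹ * x * f a ^ 2) = f c →
          derivedSeries K n ≠ ⊥ := by
  obtain ⟨m, rfl⟩ := Nat.exists_eq_add_of_le' hn
  let B := IteratedWreathProduct (Multiplicative (ZMod 2)) m
  let e : ULift (B ≀ᵣ AffineGroup (ZMod 7)) ≃* B ≀ᵣ AffineGroup (ZMod 7) := MulEquiv.ulift
  refine ⟨GrpCat.of (ULift (B ≀ᵣ AffineGroup (ZMod 7))), e.symm (inl a), e.symm (inl c), ?_, ?_,
    fun K f hf x hx ↦ ?_⟩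
  · rw [e.derivedSeries_eq_bot_iff, add_comm]
    refine derivedSeries_add_eq_bot (AffineGroup.derivedSeries_two_eq_bot _) ?_
    simpa using IteratedWreathProduct.derivedSeries_mul_eq_bot
      (derivedSeries_one_eq_bot_of_commGroup (Multiplicative (ZMod 2))) m
  · rw [Ne, e.derivedSeries_eq_bot_iff]
    cases m with
    | zero => exact derivedSeries_one_ne_bot
    | succ m =>
      rw [show m + 1 + 2 - 1 = 2 + m by omega]
      exact derivedSeries_two_add_ne_bot (IteratedWreathProduct.derivedSeries_ne_bot m)
  · have hf' : Function.Injective (f.comp e.symm.toMonoidHom) := hf.comp e.symm.injective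
    cases m with
    | zero => exact derivedSeries_two_ne_bot_of_solution _ hx hf'
    | succ m =>
      rw [show m + 1 + 2 = 3 + m by omega]
      exact derivedSeries_three_add_ne_bot_of_solution _ hx hf'
        (IteratedWreathProduct.derivedSeries_ne_bot m)
end
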